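/- Let q be a real polynomial with all roots in the open unit disc and Q(t) = (1-t)q(t). Let a ∈ ℓ^∞ be real. If b_n := ∑_j Q_j a_{n+j} satisfies b_n ≥ 0 for all n, then lim_{n→∞} a_n exists. -/

import Mathlib

/-!
Let `E` be the left shift on sequences and `c := q(E) a`. The hypothesis says
`c n - c (n + 1) = b n ≥ 0`, so `c` is antitone and bounded, hence convergent. Over `ℂ`, `q` is a
constant times a product of factors `X - r` with `|r| < 1`, and each factor can be undone on
convergent sequences: if `d (n + 1) - r d n → γ` then `d n → γ / (1 - r)`. Peeling off the roots one
at a time gives `a n → lim c / q(1)`.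
-/

open Filter Finset Polynomial Topology

def seqShift (R : Type*) [CommSemiring R] : Module.End R (ℕ → R) :=
  LinearMap.funLeft R R Nat.succ

section Shift

variable {R : Type*} [CommSemiring R]

@[simp]
lemma seqShift_apply (a : ℕ → R) (n : ℕ) : seqShift R a n = a (n + 1) := rfl

lemma seqShift_pow_apply (j : ℕ) (a : ℕ → R) (n : ℕ) : (seqShift R ^ j) a n = a (n + j) := by
  induction j generalizing n with
  | zero => rfl
  | succ j ih => rw [pow_succ', Module.End.mul_apply, seqShift_apply, ih, add_assoc, add_comm 1]

lemma aeval_seqShift_apply (p : R[X]) {N : ℕ} (hN : p.natDegree < N) (a : ℕ → R) (n : ℕ) :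
    aeval (seqShift R) p a n = ∑ j ∈ range N, p.coeff j * a (n + j) := by
  simp only [aeval_eq_sum_range' hN, LinearMap.sum_apply, Finset.sum_apply,
    LinearMap.smul_apply, Pi.smul_apply, seqShift_pow_apply, smul_eq_mul]

lemma aeval_seqShift_map {S : Type*} [CommSemiring S] (f : R →+* S) (p : R[X]) (a : ℕ → R) :
    aeval (seqShift S) (p.map f) (f ∘ a) = f ∘ aeval (seqShift R) p a := by
  have hN : (p.map f).natDegree < p.natDegree + 1 := Nat.lt_succ_of_le (natDegree_map_le ..)
  ext n
  simp [aeval_seqShift_apply _ hN, aeval_seqShift_apply p (Nat.lt_succ_self _), map_sum]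

end Shift

lemma norm_aeval_seqShift_apply_le {R : Type*} [NormedCommRing R] (p : R[X]) {a : ℕ → R} {M : ℝ}
    (ha : ∀ n, ‖a n‖ ≤ M) (n : ℕ) :
    ‖aeval (seqShift R) p a n‖ ≤ (∑ j ∈ range (p.natDegree + 1), ‖p.coeff j‖) * M := by
  rw [aeval_seqShift_apply p (Nat.lt_succ_self _), Finset.sum_mul]
  refine (norm_sum_le _ _).trans (Finset.sum_le_sum fun j _ => ?_)
  exact (norm_mul_le _ _).trans (mul_le_mul_of_nonneg_left (ha _) (norm_nonneg _))

section Ring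

variable {R : Type*} [CommRing R]

lemma aeval_X_sub_C_seqShift_apply (r : R) (a : ℕ → R) (n : ℕ) :
    aeval (seqShift R) (X - C r) a n = a (n + 1) - r * a n := by
  simp [Module.algebraMap_end_apply]

lemma aeval_one_sub_X_mul_seqShift_apply (p : R[X]) (a : ℕ → R) (n : ℕ) :
    aeval (seqShift R) ((1 - X) * p) a n =
      aeval (seqShift R) p a n - aeval (seqShift R) p a (n + 1) := by
  simp [Module.End.mul_apply]

end Ring

lemma tendsto_zero_of_le_mul_add {u v : ℕ → ℝ} {ρ : ℝ} (hρ0 : 0 ≤ ρ) (hρ : ρ < 1)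
    (hu : ∀ n, 0 ≤ u n) (hv : Tendsto v atTop (𝓝 0)) (h : ∀ n, u (n + 1) ≤ ρ * u n + v n) :
    Tendsto u atTop (𝓝 0) := by
  rw [tendsto_order]
  refine ⟨fun b hb => Eventually.of_forall fun n => hb.trans_le (hu n), fun δ hδ => ?_⟩
  -- Once `v < (δ / 2) (1 - ρ)`, the excess `u - δ / 2` is contracted by `ρ` at each step.
  obtain ⟨N, hN⟩ := eventually_atTop.1
    (hv.eventually (gt_mem_nhds (show 0 < δ / 2 * (1 - ρ) by nlinarith)))
  have hdecay : ∀ m, u (N + m) - δ / 2 ≤ ρ ^ m * (u N - δ / 2) := by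
    intro m
    induction m with
    | zero => simp
    | succ m ih =>
      calc u (N + m + 1) - δ / 2 ≤ ρ * (u (N + m) - δ / 2) := by
            nlinarith [h (N + m), hN (N + m) (Nat.le_add_right N m)]
        _ ≤ ρ * (ρ ^ m * (u N - δ / 2)) := mul_le_mul_of_nonneg_left ih hρ0
        _ = ρ ^ (m + 1) * (u N - δ / 2) := by ring
  have hgeom : Tendsto (fun m => ρ ^ m * (u N - δ / 2)) atTop (𝓝 0) := by
    simpa using (tendsto_pow_atTop_nhds_zero_of_lt_one hρ0 hρ).mul_const (u N - δ / 2)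
  obtain ⟨M, hM⟩ := eventually_atTop.1 (hgeom.eventually (gt_mem_nhds (half_pos hδ)))
  refine eventually_atTop.2 ⟨N + M, fun n hn => ?_⟩
  obtain ⟨m, rfl⟩ := Nat.exists_eq_add_of_le (le_of_add_le_left hn)
  linarith [hdecay m, hM m (by omega)]

lemma tendsto_of_tendsto_sub_mul {𝕜 : Type*} [NormedField 𝕜] {r : 𝕜} (hr : ‖r‖ < 1)
    {d : ℕ → 𝕜} {c : 𝕜} (h : Tendsto (fun n => d (n + 1) - r * d n) atTop (𝓝 c)) :
    Tendsto d atTop (𝓝 (c / (1 - r))) := by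
  have h1r : 1 - r ≠ 0 := sub_ne_zero.2 fun h => by simp [← h] at hr
  set l := c / (1 - r)
  have hl : c = l - r * l := by rw [← one_sub_mul]; exact (mul_div_cancel₀ c h1r).symm
  rw [tendsto_iff_norm_sub_tendsto_zero] at h ⊢
  refine tendsto_zero_of_le_mul_add (norm_nonneg r) hr (fun n => norm_nonneg _) h fun n => ?_
  calc ‖d (n + 1) - l‖ = ‖r * (d n - l) + (d (n + 1) - r * d n - c)‖ := by rw [hl]; ring_nf
    _ ≤ ‖r‖ * ‖d n - l‖ + ‖d (n + 1) - r * d n - c‖ := by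
      rw [← norm_mul]; exact norm_add_le _ _

lemma tendsto_of_tendsto_aeval_seqShift_prod {𝕜 : Type*} [NormedField 𝕜] (s : Multiset 𝕜)
    (hs : ∀ r ∈ s, ‖r‖ < 1) {a : ℕ → 𝕜} {c : 𝕜}
    (h : Tendsto (aeval (seqShift 𝕜) (s.map fun r => X - C r).prod a) atTop (𝓝 c)) :
    Tendsto a atTop (𝓝 (c / ((s.map fun r => X - C r).prod.eval 1))) := by
  induction s using Multiset.induction_on generalizing c with
  | empty => simpa using h
  | cons r s ih =>
    set P := (s.map fun r => X - C r).prod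
    simp only [Multiset.map_cons, Multiset.prod_cons, map_mul, Module.End.mul_apply] at h ⊢
    have hd : Tendsto (aeval (seqShift 𝕜) P a) atTop (𝓝 (c / (1 - r))) := by
      refine tendsto_of_tendsto_sub_mul (hs r (Multiset.mem_cons_self r s)) ?_
      simpa only [← aeval_X_sub_C_seqShift_apply] using h
    simpa [div_div] using ih (fun r' hr' => hs r' (Multiset.mem_cons_of_mem hr')) hd

lemma tendsto_of_tendsto_aeval_seqShift {𝕜 : Type*} [NormedField 𝕜] [IsAlgClosed 𝕜] {p : 𝕜[X]}
    (hp : p ≠ 0) (hroots : ∀ z, p.IsRoot z → ‖z‖ < 1) {a : ℕ → 𝕜} {c : 𝕜}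
    (h : Tendsto (aeval (seqShift 𝕜) p a) atTop (𝓝 c)) :
    Tendsto a atTop (𝓝 (c / p.eval 1)) := by
  have hfac :=
    C_leadingCoeff_mul_prod_multiset_X_sub_C (IsAlgClosed.card_roots_eq_natDegree (p := p))
  have hlc : p.leadingCoeff ≠ 0 := leadingCoeff_ne_zero.2 hp
  rw [← hfac] at h ⊢
  simp only [map_mul, aeval_C, Module.End.mul_apply, Module.algebraMap_end_apply] at h
  have := tendsto_of_tendsto_aeval_seqShift_prod p.roots
    (fun r hr => hroots r (isRoot_of_mem_roots hr))
    (by simpa [hlc] using h.const_smul p.leadingCoeff⁻¹)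
  convert this using 2
  rw [eval_mul, eval_C]
  field_simp

theorem stmt18 (q : Polynomial ℝ) (hq : q ≠ 0)
    (hroots : ∀ z : ℂ, (q.map (algebraMap ℝ ℂ)).IsRoot z → ‖z‖ < 1)
    (a : ℕ → ℝ) (Mb : ℝ) (hab : ∀ n, |a n| ≤ Mb)
    (hb : ∀ n : ℕ, 0 ≤ ∑ j ∈ Finset.range (((1 - X) * q).natDegree + 1),
      ((1 - X) * q).coeff j * a (n + j)) :
    ∃ l : ℝ, Tendsto a atTop (nhds l) := by
  set c := aeval (seqShift ℝ) q a
  have hanti : Antitone c := antitone_nat_of_succ_le fun n => by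
    have := hb n
    rwa [← aeval_seqShift_apply _ (Nat.lt_succ_self _), aeval_one_sub_X_mul_seqShift_apply,
      sub_nonneg] at this
  have hbdd : BddBelow (Set.range c) := by
    refine ⟨-((∑ j ∈ range (q.natDegree + 1), ‖q.coeff j‖) * Mb), ?_⟩
    exact Set.forall_mem_range.2 fun n => neg_le_of_abs_le (norm_aeval_seqShift_apply_le q hab n)
  have hcℂ : Tendsto (aeval (seqShift ℂ) (q.map (algebraMap ℝ ℂ)) (Complex.ofReal ∘ a)) atTop
      (𝓝 ↑(⨅ n, c n)) :=
    aeval_seqShift_map Complex.ofRealHom q a ▸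
      (Complex.continuous_ofReal.tendsto _).comp (tendsto_atTop_ciInf hanti hbdd)
  have ha := tendsto_of_tendsto_aeval_seqShift (Polynomial.map_ne_zero hq) hroots hcℂ
  exact ⟨_, (Complex.continuous_re.tendsto _).comp ha⟩
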